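/- Let V be a variety of τ-algebras. The assignments K ↦ B^K and B ↦ K^B establish a one-to-one correspondence between the subclasses of V_fg that are pseudovarieties of finitely generated algebras and the subfamilies of Con(F^V) that are closed under inverse substitution and are filters in each component, i.e. upward closed and closed under finite intersections in each Con(F_k^V). -/

import Mathlib

/-! Universal-algebra preamble: functional signatures, algebras (with nonempty
carriers, as usual in universal algebra), terms, homomorphisms, congruences,
quotients, free algebras, and the operators/uniformities of the paper.

Families indexed over the components of a clone are indexed by `k : ℕ`, where
index `k` stands for the component of arity `k + 1` (so all arities `≥ 1`). -/

/-- A functional signature: a type of function symbols together with arities. -/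
structure Signature : Type 1 where
  F : Type
  arity : F → ℕ

/-- A τ-algebra: a nonempty carrier together with an interpretation of each symbol. -/
structure Alg (σ : Signature) : Type 1 where
  carrier : Type
  nonempty : Nonempty carrier
  op : ∀ f : σ.F, (Fin (σ.arity f) → carrier) → carrier

/-- Abstract τ-terms over the variables x_1, …, x_n. -/
inductive Trm (σ : Signature) (n : ℕ) : Type
  | var : Fin n → Trm σ n
  | app : ∀ f : σ.F, (Fin (σ.arity f) → Trm σ n) → Trm σ n

variable {σ : Signature}

/-- Evaluation of a term in an algebra under a valuation of the variables. -/
def Trm.eval {n : ℕ} (A : Alg σ) (v : Fin n → A.carrier) : Trm σ n → A.carrier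
  | .var i => v i
  | .app f ts => A.op f fun i => Trm.eval A v (ts i)

/-- The term operation `t^A` induced on `A` by the term `t`. -/
def termOp {n : ℕ} (A : Alg σ) (t : Trm σ n) : (Fin n → A.carrier) → A.carrier :=
  fun v => t.eval A v

/-- Homomorphisms of τ-algebras. -/
def IsHom (A B : Alg σ) (h : A.carrier → B.carrier) : Prop :=
  ∀ (f : σ.F) (x : Fin (σ.arity f) → A.carrier), h (A.op f x) = B.op f fun i => h (x i)

/-- Isomorphism of τ-algebras. -/
def Isomorphic (A B : Alg σ) : Prop :=
  ∃ h : A.carrier → B.carrier, IsHom A B h ∧ Function.Bijective h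

/-- Membership in the subuniverse generated by `S`. -/
inductive InClosure (A : Alg σ) (S : Set A.carrier) : A.carrier → Prop
  | base : ∀ a ∈ S, InClosure A S a
  | app : ∀ (f : σ.F) (x : Fin (σ.arity f) → A.carrier),
      (∀ i, InClosure A S (x i)) → InClosure A S (A.op f x)

/-- An algebra is finitely generated if a finite subset generates it. -/
def FinGen (A : Alg σ) : Prop :=
  ∃ S : Set A.carrier, S.Finite ∧ ∀ a, InClosure A S a

/-- Product of a family of algebras. -/
def PiAlg {ι : Type} (A : ι → Alg σ) : Alg σ where
  carrier := ∀ i, (A i).carrier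
  nonempty := ⟨fun i => Classical.choice (A i).nonempty⟩
  op f x := fun i => (A i).op f fun j => x j i

/-- A congruence: an equivalence relation compatible with all operations. -/
def IsCongruence (A : Alg σ) (r : A.carrier → A.carrier → Prop) : Prop :=
  Equivalence r ∧ ∀ (f : σ.F) (x y : Fin (σ.arity f) → A.carrier),
    (∀ i, r (x i) (y i)) → r (A.op f x) (A.op f y)

/-- Bundled congruences on an algebra. -/
structure Cong (A : Alg σ) : Type where
  r : A.carrier → A.carrier → Prop
  iscon : IsCongruence A r

/-- The quotient algebra of `A` by (a relation which is intended to be) a congruence. -/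
noncomputable def quotAlg (A : Alg σ) (r : A.carrier → A.carrier → Prop) : Alg σ where
  carrier := Quot r
  nonempty := ⟨Quot.mk r (Classical.choice A.nonempty)⟩
  op f x := Quot.mk r (A.op f fun i => (x i).out)

/-- The subalgebra of `A` on a nonempty subset closed under the operations. -/
def subAlg (A : Alg σ) (S : Set A.carrier) (hne : S.Nonempty)
    (hcl : ∀ (f : σ.F) (x : Fin (σ.arity f) → A.carrier), (∀ i, x i ∈ S) → A.op f x ∈ S) :
    Alg σ where
  carrier := {a : A.carrier // a ∈ S}
  nonempty := ⟨⟨hne.choose, hne.choose_spec⟩⟩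
  op f x := ⟨A.op f fun i => (x i).1, hcl f _ fun i => (x i).2⟩

/-- The subalgebra of `A` generated by a nonempty subset `S`. -/
def genSubAlg (A : Alg σ) (S : Set A.carrier) (hne : S.Nonempty) : Alg σ where
  carrier := {a : A.carrier // InClosure A S a}
  nonempty := ⟨⟨hne.choose, InClosure.base _ hne.choose_spec⟩⟩
  op f x := ⟨A.op f fun i => (x i).1, InClosure.app f _ fun i => (x i).2⟩

/-- H: homomorphic images of members of `K`. -/
def Hcl (K : Set (Alg σ)) : Set (Alg σ) :=
  {B | ∃ A ∈ K, ∃ h : A.carrier → B.carrier, IsHom A B h ∧ Function.Surjective h}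

/-- I: isomorphic copies of members of `K`. -/
def Icl (K : Set (Alg σ)) : Set (Alg σ) := {B | ∃ A ∈ K, Isomorphic A B}

/-- S: isomorphic copies of subalgebras (i.e. algebras embedding into members) of `K`. -/
def Scl (K : Set (Alg σ)) : Set (Alg σ) :=
  {B | ∃ A ∈ K, ∃ e : B.carrier → A.carrier, IsHom B A e ∧ Function.Injective e}

/-- P_f: isomorphic copies of finite (nonempty) products of members of `K`. -/
def Pfcl (K : Set (Alg σ)) : Set (Alg σ) :=
  {B | ∃ (n : ℕ) (A : Fin (n + 1) → Alg σ), (∀ i, A i ∈ K) ∧ Isomorphic (PiAlg A) B}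

/-- S_f: isomorphic copies of finitely generated subalgebras of members of `K`. -/
def Sf (K : Set (Alg σ)) : Set (Alg σ) :=
  {B | FinGen B ∧ ∃ A ∈ K, ∃ e : B.carrier → A.carrier, IsHom B A e ∧ Function.Injective e}

/-- S P_f: isomorphic copies of finitely generated subalgebras of finite products
of members of `K`. -/
def SPf (K : Set (Alg σ)) : Set (Alg σ) :=
  {B | FinGen B ∧ ∃ (n : ℕ) (A : Fin (n + 1) → Alg σ), (∀ i, A i ∈ K) ∧
    ∃ e : B.carrier → (PiAlg A).carrier, IsHom B (PiAlg A) e ∧ Function.Injective e}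

/-- A pseudovariety of finitely generated algebras: a class of finitely generated
algebras closed under homomorphic images and under isomorphic copies of finitely
generated subalgebras of finite products of its members. -/
def IsPseudovarietyFG (C : Set (Alg σ)) : Prop :=
  (∀ A ∈ C, FinGen A) ∧ Hcl C ⊆ C ∧ SPf C ⊆ C

/-- A pseudovariety of finite algebras: a class of finite algebras closed under
finite products, subalgebras and homomorphic images. -/
def IsPseudovarietyFin (C : Set (Alg σ)) : Prop :=
  (∀ A ∈ C, Finite A.carrier) ∧ Hcl C ⊆ C ∧ Scl C ⊆ C ∧ Pfcl C ⊆ C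

/-- A variety: a class closed under arbitrary products, subalgebras and
homomorphic images. -/
def IsVariety (V : Set (Alg σ)) : Prop :=
  (∀ (ι : Type) (A : ι → Alg σ), (∀ i, A i ∈ V) → PiAlg A ∈ V) ∧
  Scl V ⊆ V ∧ Hcl V ⊆ V

/-- The identities of the class `C`: `s` and `t` are identified iff they induce the
same operation on every member of `C`. -/
def FreeCon (C : Set (Alg σ)) (n : ℕ) : Trm σ n → Trm σ n → Prop :=
  fun s t => ∀ A ∈ C, ∀ v : Fin n → A.carrier, s.eval A v = t.eval A v

/-- `freeAlg C k` is `F_{k+1}^C`, the free algebra for `C` on `k + 1` generators: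
the term algebra on the variables `x_1, …, x_{k+1}` modulo the identities of `C`.
(The index `k` stands for arity `k + 1`, so all components have arity `≥ 1`.) -/
noncomputable def freeAlg (C : Set (Alg σ)) (k : ℕ) : Alg σ where
  carrier := Quot (FreeCon C (k + 1))
  nonempty := ⟨Quot.mk _ (Trm.var 0)⟩
  op f x := Quot.mk _ (Trm.app f fun i => (x i).out)

/-- The finitely generated members of `V`. -/
def Vfg (V : Set (Alg σ)) : Set (Alg σ) := {A | A ∈ V ∧ FinGen A}

/-- `B^K`: the congruences of the free algebras whose quotient is isomorphic to a
member of `K`. -/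
def BK (V K : Set (Alg σ)) (k : ℕ) : Set (Cong (freeAlg V k)) :=
  {θ | quotAlg (freeAlg V k) θ.r ∈ Icl K}

/-- `K^B`: isomorphic copies of the quotients of free algebras by congruences in `B`. -/
def KB (V : Set (Alg σ)) (B : ∀ k : ℕ, Set (Cong (freeAlg V k))) : Set (Alg σ) :=
  Icl {A | ∃ (k : ℕ), ∃ θ ∈ B k, A = quotAlg (freeAlg V k) θ.r}

/-- `θ/t̄`: the inverse substitution of the congruence `θ` along the tuple `t̄`;
`s (θ/t̄) s'` iff `s(t₁,…,t_m) θ s'(t₁,…,t_m)`. -/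
noncomputable def conSubstRel {V : Set (Alg σ)} {k : ℕ} (θ : Cong (freeAlg V k)) {m : ℕ}
    (t : Fin (m + 1) → (freeAlg V k).carrier) :
    (freeAlg V m).carrier → (freeAlg V m).carrier → Prop :=
  fun s s' => θ.r (Trm.eval (freeAlg V k) t s.out) (Trm.eval (freeAlg V k) t s'.out)

/-- A family of congruences is closed under inverse substitution. -/
def InvSubstClosed (V : Set (Alg σ)) (B : ∀ k : ℕ, Set (Cong (freeAlg V k))) : Prop :=
  ∀ (k m : ℕ), ∀ θ ∈ B k, ∀ t : Fin (m + 1) → (freeAlg V k).carrier,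
    ∃ θ' ∈ B m, θ'.r = conSubstRel θ t

/-- A family of congruences is closed under finite intersections (componentwise). -/
def InterClosed (V : Set (Alg σ)) (B : ∀ k : ℕ, Set (Cong (freeAlg V k))) : Prop :=
  ∀ (k n : ℕ) (θs : Fin (n + 1) → Cong (freeAlg V k)), (∀ i, θs i ∈ B k) →
    ∃ θ' ∈ B k, θ'.r = fun a b => ∀ i, (θs i).r a b

/-- A family of congruences is upward closed (componentwise). -/
def UpClosed (V : Set (Alg σ)) (B : ∀ k : ℕ, Set (Cong (freeAlg V k))) : Prop :=
  ∀ (k : ℕ), ∀ θ ∈ B k, ∀ ψ : Cong (freeAlg V k), (∀ a b, θ.r a b → ψ.r a b) → ψ ∈ B k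

/-- A filter on `X × X` is a uniformity: every entourage contains the diagonal, the
converse of an entourage is an entourage, and the generalised triangle inequality. -/
def IsUniformity {X : Type} (u : Filter (X × X)) : Prop :=
  (∀ U ∈ u, ∀ x : X, (x, x) ∈ U) ∧
  (∀ U ∈ u, {p : X × X | (p.2, p.1) ∈ U} ∈ u) ∧
  (∀ U ∈ u, ∃ W ∈ u, ∀ x y z : X, (x, y) ∈ W → (y, z) ∈ W → (x, z) ∈ U)

/-- `U^C` (the component of index `k`, i.e. of arity `k + 1`): the filter on
`F_{k+1}^V × F_{k+1}^V` generated by the congruences `θ` of `F_{k+1}^V` such that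
`F_{k+1}^V/θ` is isomorphic to a member of `C`. -/
noncomputable def unifC (V C : Set (Alg σ)) (k : ℕ) :
    Filter ((freeAlg V k).carrier × (freeAlg V k).carrier) :=
  Filter.generate
    {U | ∃ θ : Cong (freeAlg V k), quotAlg (freeAlg V k) θ.r ∈ Icl C ∧ U = {p | θ.r p.1 p.2}}

/-- The `(k+1)`-ary part of `Clo(A)`: the `(k+1)`-ary term operations of `A`. -/
def CloK (A : Alg σ) (k : ℕ) : Type :=
  {g : (Fin (k + 1) → A.carrier) → A.carrier // ∃ t : Trm σ (k + 1), g = termOp A t}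

/-- The uniformity of pointwise convergence on the `(k+1)`-ary part of `Clo(A)`:
generated by the sets `U_ā = {(f, g) | f(ā) = g(ā)}`. -/
noncomputable def ptwUnif (A : Alg σ) (k : ℕ) : Filter (CloK A k × CloK A k) :=
  Filter.generate {U | ∃ a : Fin (k + 1) → A.carrier, U = {p | p.1.1 a = p.2.1 a}}

/-- The natural map from the free algebra for `C` onto `Clo(A)`, sending the class
of a term `t` to the term operation `t^A`. -/
noncomputable def natMap (C : Set (Alg σ)) (A : Alg σ) (k : ℕ) :
    (freeAlg C k).carrier → CloK A k :=
  fun q => ⟨termOp A q.out, q.out, rfl⟩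

/-- The natural map between the free algebras of two classes (class of `t` to
class of `t`). -/
noncomputable def freeNatMap (C D : Set (Alg σ)) (k : ℕ) :
    (freeAlg C k).carrier → (freeAlg D k).carrier :=
  fun q => Quot.mk _ q.out

/-- The natural map `Clo(A) → Clo(B)`, sending `t^A` to `t^B`. -/
noncomputable def cloNatMap (A B : Alg σ) (k : ℕ) : CloK A k → CloK B k :=
  fun g => ⟨termOp B (Classical.choose g.2), Classical.choose g.2, rfl⟩

/-- The variety generated by `A`. -/
def varietyGen (A : Alg σ) : Set (Alg σ) :=
  {B | ∀ V : Set (Alg σ), IsVariety V → A ∈ V → B ∈ V}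

/-- The pseudovariety generated by `A`: the smallest class containing `A` closed
under finite products, subalgebras and homomorphic images. -/
def psvGen (A : Alg σ) : Set (Alg σ) :=
  {B | ∀ C : Set (Alg σ), A ∈ C → Hcl C ⊆ C → Scl C ⊆ C → Pfcl C ⊆ C → B ∈ C}

/-- The pseudovariety of finitely generated algebras generated by `A`: the finitely
generated members of the pseudovariety generated by `A`. -/
def psvFgGen (A : Alg σ) : Set (Alg σ) := {B | FinGen B ∧ B ∈ psvGen A}

/-! Every finitely generated member of `V` is a quotient `F_m^V/θ`, and a homomorphism
`F_m^V → F_k^V/ψ` is determined by the images `t̄` of the generators, so its kernel is `ψ/t̄`.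
Hence closure of `K` under `S P_f` and `H` translates into closure of `B^K` under finite
intersections (kernels into finite products), inverse substitution and enlargement, and
conversely; the two assignments are mutually inverse because `θ ∈ B^{K^B}` means that
`F_k^V/θ ≅ F_m^V/ψ` for some `ψ ∈ B`, i.e. `θ = ψ/t̄`. -/

section Basics

theorem isHom_comp {A B C : Alg σ} {g : A.carrier → B.carrier} {h : B.carrier → C.carrier}
    (hg : IsHom A B g) (hh : IsHom B C h) : IsHom A C (fun a => h (g a)) := by
  intro f x
  show h (g (A.op f x)) = _
  rw [hg, hh]

theorem proj_isHom {ι : Type} (A : ι → Alg σ) (i : ι) :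
    IsHom (PiAlg A) (A i) (fun x => x i) := fun _ _ => rfl

theorem pi_isHom {ι : Type} {A : ι → Alg σ} {C : Alg σ} {h : ∀ i, C.carrier → (A i).carrier}
    (hh : ∀ i, IsHom C (A i) (h i)) : IsHom C (PiAlg A) (fun c i => h i c) := by
  intro f x
  funext i
  exact hh i f x

theorem isomorphic_refl (A : Alg σ) : Isomorphic A A :=
  ⟨id, fun _ _ => rfl, Function.bijective_id⟩

theorem isomorphic_symm {A B : Alg σ} (h : Isomorphic A B) : Isomorphic B A := by
  obtain ⟨h, hh, hb⟩ := h
  have : Nonempty A.carrier := A.nonempty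
  have hri : Function.RightInverse (Function.invFun h) h := Function.rightInverse_invFun hb.2
  refine ⟨Function.invFun h, fun f x => hb.1 ?_, Function.bijective_iff_has_inverse.2
    ⟨h, hri, Function.leftInverse_invFun hb.1⟩⟩
  rw [hri, hh]
  exact congrArg _ (funext fun i => (hri (x i)).symm)

theorem isomorphic_trans {A B C : Alg σ} (h₁ : Isomorphic A B) (h₂ : Isomorphic B C) :
    Isomorphic A C := by
  obtain ⟨g, hg, hgb⟩ := h₁
  obtain ⟨h, hh, hhb⟩ := h₂
  exact ⟨fun a => h (g a), isHom_comp hg hh, hhb.comp hgb⟩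

theorem Icl_subset_Hcl (K : Set (Alg σ)) : Icl K ⊆ Hcl K := by
  rintro B ⟨A, hA, h, hh, hb⟩
  exact ⟨A, hA, h, hh, hb.2⟩

theorem Cong.ext' {A : Alg σ} {θ ψ : Cong A} (h : θ.r = ψ.r) : θ = ψ := by
  cases θ; cases ψ; cases h; rfl

def kerRel {X Y : Type} (h : X → Y) : X → X → Prop := fun a b => h a = h b

theorem kerRel_congruence {A B : Alg σ} {h : A.carrier → B.carrier} (hh : IsHom A B h) :
    IsCongruence A (kerRel h) := by
  refine ⟨⟨fun _ => rfl, fun e => e.symm, fun e₁ e₂ => e₁.trans e₂⟩, fun f x y hxy => ?_⟩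
  show h _ = h _
  rw [hh, hh]
  exact congrArg _ (funext hxy)

def Cong.ker {A B : Alg σ} {h : A.carrier → B.carrier} (hh : IsHom A B h) : Cong A :=
  ⟨kerRel h, kerRel_congruence hh⟩

theorem out_rel {X : Type} {r : X → X → Prop} (hr : Equivalence r) (a : X) :
    r (Quot.mk r a).out a :=
  (hr.quot_mk_eq_iff _ _).mp (Quot.out_eq _)

theorem quot_mk_isHom {A : Alg σ} {r : A.carrier → A.carrier → Prop} (hr : IsCongruence A r) :
    IsHom A (quotAlg A r) (Quot.mk r) := fun f x =>
  Quot.sound (hr.2 f _ _ fun i => hr.1.symm (out_rel hr.1 (x i)))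

theorem quot_mk_surjective {X : Type} (r : X → X → Prop) : Function.Surjective (Quot.mk r) :=
  fun q => ⟨q.out, Quot.out_eq q⟩

theorem quot_lift_isHom {A C : Alg σ} {h : A.carrier → C.carrier} (hh : IsHom A C h) :
    IsHom (quotAlg A (kerRel h)) C (Quot.lift h (fun _ _ e => e)) := by
  intro f x
  show h (A.op f fun i => (x i).out) = _
  rw [hh]
  congr 1
  funext i
  conv_rhs => rw [← Quot.out_eq (x i)]

theorem quot_lift_injective {X Y : Type} (h : X → Y) :
    Function.Injective (Quot.lift h (fun _ _ e => e) : Quot (kerRel h) → Y) := by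
  intro q q'
  induction q using Quot.ind with | _ a =>
  induction q' using Quot.ind with | _ b =>
  exact fun e => Quot.sound e

theorem isomorphic_quotAlg_kerRel {A C : Alg σ} {h : A.carrier → C.carrier} (hh : IsHom A C h)
    (hs : Function.Surjective h) : Isomorphic (quotAlg A (kerRel h)) C := by
  refine ⟨Quot.lift h (fun _ _ e => e), quot_lift_isHom hh, quot_lift_injective h, fun c => ?_⟩
  obtain ⟨a, rfl⟩ := hs c
  exact ⟨Quot.mk _ a, rfl⟩

theorem exists_surjective_quotAlg_of_le {A : Alg σ} {r s : A.carrier → A.carrier → Prop}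
    (hs : IsCongruence A s) (hrs : ∀ a b, r a b → s a b) :
    ∃ g : (quotAlg A r).carrier → (quotAlg A s).carrier,
      IsHom (quotAlg A r) (quotAlg A s) g ∧ Function.Surjective g := by
  let g : Quot r → Quot s := Quot.lift (Quot.mk s) fun a b h => Quot.sound (hrs a b h)
  have hg : ∀ q, g q = Quot.mk s q.out := fun q => by
    conv_lhs => rw [← Quot.out_eq q]
  refine ⟨g, fun f (x : Fin _ → Quot r) => ?_, fun q => ⟨Quot.mk r q.out, Quot.out_eq q⟩⟩
  show Quot.mk s _ = Quot.mk s (A.op f fun i => (g (x i)).out)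
  refine Quot.sound (hs.2 f _ _ fun i => ?_)
  rw [hg]
  exact hs.1.symm (out_rel hs.1 _)

theorem inClosure_mono {A : Alg σ} {S T : Set A.carrier} (hST : S ⊆ T) {a : A.carrier}
    (ha : InClosure A S a) : InClosure A T a := by
  induction ha with
  | base a haS => exact .base a (hST haS)
  | app f x _ ih => exact .app f x ih

theorem inClosure_image {A B : Alg σ} {h : A.carrier → B.carrier} (hh : IsHom A B h)
    {S : Set A.carrier} {a : A.carrier} (ha : InClosure A S a) :
    InClosure B (h '' S) (h a) := by
  induction ha with
  | base a haS => exact .base _ ⟨a, haS, rfl⟩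
  | app f x _ ih => rw [hh]; exact .app f _ ih

theorem FinGen.of_surjective {A B : Alg σ} {h : A.carrier → B.carrier} (hh : IsHom A B h)
    (hs : Function.Surjective h) (hA : FinGen A) : FinGen B := by
  obtain ⟨S, hSf, hSg⟩ := hA
  refine ⟨h '' S, hSf.image h, fun b => ?_⟩
  obtain ⟨a, rfl⟩ := hs b
  exact inClosure_image hh (hSg a)

end Basics

section FreeAlgebra

theorem freeCon_equivalence (C : Set (Alg σ)) (n : ℕ) : Equivalence (FreeCon C n) :=
  ⟨fun _ _ _ _ => rfl, fun h A hA v => (h A hA v).symm,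
   fun h₁ h₂ A hA v => (h₁ A hA v).trans (h₂ A hA v)⟩

theorem freeCon_app {C : Set (Alg σ)} {n : ℕ} {f : σ.F} {ts ts' : Fin (σ.arity f) → Trm σ n}
    (h : ∀ i, FreeCon C n (ts i) (ts' i)) : FreeCon C n (Trm.app f ts) (Trm.app f ts') :=
  fun A hA v => congrArg (A.op f) (funext fun i => h i A hA v)

theorem freeAlg_op_mk (V : Set (Alg σ)) (k : ℕ) (f : σ.F)
    (ts : Fin (σ.arity f) → Trm σ (k + 1)) :
    (freeAlg V k).op f (fun i => Quot.mk _ (ts i)) = Quot.mk _ (Trm.app f ts) :=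
  Quot.sound (freeCon_app fun i => out_rel (freeCon_equivalence V (k + 1)) (ts i))

theorem freeAlg_induction {V : Set (Alg σ)} {k : ℕ} {p : (freeAlg V k).carrier → Prop}
    (var : ∀ j, p (Quot.mk _ (Trm.var j)))
    (op : ∀ (f : σ.F) (x : Fin (σ.arity f) → (freeAlg V k).carrier),
      (∀ i, p (x i)) → p ((freeAlg V k).op f x))
    (q : (freeAlg V k).carrier) : p q := by
  suffices h : ∀ t : Trm σ (k + 1), p (Quot.mk _ t) by
    rw [← Quot.out_eq q]
    exact h _
  intro t
  induction t with
  | var j => exact var j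
  | app f ts ih =>
    rw [← freeAlg_op_mk]
    exact op f _ ih

theorem freeAlg_finGen (V : Set (Alg σ)) (k : ℕ) : FinGen (freeAlg V k) :=
  ⟨Set.range fun j => Quot.mk _ (Trm.var j), Set.finite_range _,
    freeAlg_induction (fun j => .base _ ⟨j, rfl⟩) fun f _ => .app f _⟩

theorem IsHom.eq_of_freeAlg {V : Set (Alg σ)} {m : ℕ} {C : Alg σ}
    {h₁ h₂ : (freeAlg V m).carrier → C.carrier}
    (hh₁ : IsHom (freeAlg V m) C h₁) (hh₂ : IsHom (freeAlg V m) C h₂)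
    (hvar : ∀ j, h₁ (Quot.mk _ (Trm.var j)) = h₂ (Quot.mk _ (Trm.var j)))
    (q : (freeAlg V m).carrier) : h₁ q = h₂ q :=
  freeAlg_induction (p := fun q => h₁ q = h₂ q) hvar
    (fun f x ih => by rw [hh₁, hh₂, funext ih]) q

noncomputable def evalHom (V : Set (Alg σ)) (m : ℕ) (C : Alg σ) (b : Fin (m + 1) → C.carrier) :
    (freeAlg V m).carrier → C.carrier :=
  fun q => Trm.eval C b q.out

section evalHom

variable {V : Set (Alg σ)} {m : ℕ} {C : Alg σ} {b : Fin (m + 1) → C.carrier}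

theorem evalHom_mk (hC : C ∈ V) (t : Trm σ (m + 1)) :
    evalHom V m C b (Quot.mk _ t) = Trm.eval C b t :=
  out_rel (freeCon_equivalence V (m + 1)) t C hC b

theorem evalHom_isHom (hC : C ∈ V) : IsHom (freeAlg V m) C (evalHom V m C b) := fun f x =>
  evalHom_mk hC (Trm.app f fun i => (x i).out)

theorem evalHom_var (hC : C ∈ V) (j : Fin (m + 1)) :
    evalHom V m C b (Quot.mk _ (Trm.var j)) = b j :=
  evalHom_mk hC (Trm.var j)

theorem exists_evalHom_eq (hC : C ∈ V) {c : C.carrier} (hc : InClosure C (Set.range b) c) :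
    ∃ q, evalHom V m C b q = c := by
  induction hc with
  | base a ha =>
    obtain ⟨j, rfl⟩ := ha
    exact ⟨_, evalHom_var hC j⟩
  | app f x _ ih =>
    choose q hq using ih
    exact ⟨(freeAlg V m).op f q, by rw [evalHom_isHom hC, funext hq]⟩

end evalHom

/-- `F_{k+1}^V` embeds into the product of witnesses separating its distinct elements. -/
theorem freeAlg_mem {V : Set (Alg σ)} (hV : IsVariety V) (k : ℕ) : freeAlg V k ∈ V := by
  have hw : ∀ p : {p : Trm σ (k + 1) × Trm σ (k + 1) // ¬ FreeCon V (k + 1) p.1 p.2},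
      ∃ A ∈ V, ∃ v : Fin (k + 1) → A.carrier, Trm.eval A v p.1.1 ≠ Trm.eval A v p.1.2 := by
    intro p
    simpa [FreeCon] using p.2
  choose A hAV v hv using hw
  refine hV.2.1 ⟨PiAlg A, hV.1 _ A hAV, fun q p => evalHom V k (A p) (v p) q,
    pi_isHom fun p => evalHom_isHom (hAV p), fun q q' he => ?_⟩
  by_contra hne
  have hsep : ¬ FreeCon V (k + 1) q.out q'.out := fun h =>
    hne (by rw [← Quot.out_eq q, ← Quot.out_eq q']; exact Quot.sound h)
  exact hv ⟨(q.out, q'.out), hsep⟩ (congrFun he ⟨(q.out, q'.out), hsep⟩)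

theorem exists_surjective_of_finGen {V : Set (Alg σ)} {A : Alg σ} (hAV : A ∈ V)
    (hfg : FinGen A) : ∃ (m : ℕ) (h : (freeAlg V m).carrier → A.carrier),
      IsHom (freeAlg V m) A h ∧ Function.Surjective h := by
  obtain ⟨S, hSf, hSg⟩ := hfg
  obtain ⟨n, f, hf⟩ := hSf.fin_embedding
  -- pad the `n` generators with an arbitrary element, since `freeAlg V n` has `n + 1` of them
  let b : Fin (n + 1) → A.carrier := Fin.lastCases (Classical.choice A.nonempty) f
  have hsub : S ⊆ Set.range b := by
    rw [← hf]
    rintro _ ⟨i, rfl⟩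
    exact ⟨i.castSucc, Fin.lastCases_castSucc _⟩
  exact ⟨n, evalHom V n A b, evalHom_isHom hAV, fun a =>
    exists_evalHom_eq hAV (inClosure_mono hsub (hSg a))⟩

theorem exists_isomorphic_quotAlg {V : Set (Alg σ)} {A : Alg σ} (hAV : A ∈ V) (hfg : FinGen A) :
    ∃ (m : ℕ) (θ : Cong (freeAlg V m)), Isomorphic (quotAlg (freeAlg V m) θ.r) A := by
  obtain ⟨m, h, hh, hs⟩ := exists_surjective_of_finGen hAV hfg
  exact ⟨m, Cong.ker hh, isomorphic_quotAlg_kerRel hh hs⟩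

/-- The tuple `t̄` lifts the images of the generators. -/
theorem exists_kerRel_eq_conSubstRel {V : Set (Alg σ)} (hV : IsVariety V) {m k : ℕ}
    {ψ : Cong (freeAlg V k)} {h : (freeAlg V m).carrier → (quotAlg (freeAlg V k) ψ.r).carrier}
    (hh : IsHom (freeAlg V m) (quotAlg (freeAlg V k) ψ.r) h) :
    ∃ t : Fin (m + 1) → (freeAlg V k).carrier, kerRel h = conSubstRel ψ t := by
  let t : Fin (m + 1) → (freeAlg V k).carrier := fun j => (h (Quot.mk _ (Trm.var j))).out
  have hFk := freeAlg_mem hV k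
  have hlift : ∀ q, h q = Quot.mk ψ.r (evalHom V m (freeAlg V k) t q) :=
    hh.eq_of_freeAlg (isHom_comp (evalHom_isHom hFk) (quot_mk_isHom ψ.iscon)) fun j => by
      show _ = Quot.mk ψ.r (evalHom V m (freeAlg V k) t (Quot.mk _ (Trm.var j)))
      rw [evalHom_var hFk]
      exact (Quot.out_eq _).symm
  refine ⟨t, funext₂ fun a b => propext ?_⟩
  show h a = h b ↔ _
  rw [hlift, hlift]
  exact ψ.iscon.1.quot_mk_eq_iff _ _

end FreeAlgebra

section CongruencesOfClass

variable {V K : Set (Alg σ)}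

theorem exists_isHom_of_mem_BK {k : ℕ} {θ : Cong (freeAlg V k)} (hθ : θ ∈ BK V K k) :
    ∃ A ∈ K, ∃ h : (freeAlg V k).carrier → A.carrier,
      IsHom (freeAlg V k) A h ∧ kerRel h = θ.r := by
  obtain ⟨A, hA, hiso⟩ := hθ
  obtain ⟨φ, hφ, hφb⟩ := isomorphic_symm hiso
  refine ⟨A, hA, fun a => φ (Quot.mk θ.r a), isHom_comp (quot_mk_isHom θ.iscon) hφ, ?_⟩
  funext a b
  exact propext (hφb.1.eq_iff.trans (θ.iscon.1.quot_mk_eq_iff a b))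

/-- `F_{m+1}^V / ker h` embeds into `∏ W i` and is finitely generated. -/
theorem Cong.ker_mem_BK (hK : SPf K ⊆ K) {m n : ℕ} {W : Fin (n + 1) → Alg σ}
    (hW : ∀ i, W i ∈ K) {h : (freeAlg V m).carrier → (PiAlg W).carrier}
    (hh : IsHom (freeAlg V m) (PiAlg W) h) : Cong.ker hh ∈ BK V K m :=
  ⟨_, hK ⟨(freeAlg_finGen V m).of_surjective (quot_mk_isHom (kerRel_congruence hh))
      (quot_mk_surjective _), n, W, hW, _, quot_lift_isHom hh, quot_lift_injective h⟩,
    isomorphic_refl _⟩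

theorem invSubstClosed_BK (hV : IsVariety V) (hK : SPf K ⊆ K) : InvSubstClosed V (BK V K) := by
  intro k m θ hθ t
  obtain ⟨A, hA, h, hh, hker⟩ := exists_isHom_of_mem_BK hθ
  have hg : IsHom (freeAlg V m) (PiAlg fun _ : Fin 1 => A)
      (fun s _ => h (evalHom V m (freeAlg V k) t s)) :=
    pi_isHom fun _ => isHom_comp (evalHom_isHom (freeAlg_mem hV k)) hh
  refine ⟨Cong.ker hg, Cong.ker_mem_BK hK (fun _ => hA) hg, funext₂ fun a b => ?_⟩
  show ((fun _ => _) = fun _ => _) = θ.r _ _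
  rw [← hker]
  exact propext ⟨fun e => congrFun e 0, fun e => funext fun _ => e⟩

theorem interClosed_BK (hK : SPf K ⊆ K) : InterClosed V (BK V K) := by
  intro k n θs hθs
  choose A hA h hh hker using fun i => exists_isHom_of_mem_BK (hθs i)
  have hg : IsHom (freeAlg V k) (PiAlg A) (fun a i => h i a) := pi_isHom hh
  refine ⟨Cong.ker hg, Cong.ker_mem_BK hK hA hg, funext₂ fun a b => ?_⟩
  show ((fun i => h i a) = fun i => h i b) = ∀ i, (θs i).r a b
  simp only [← hker, funext_iff]
  rfl

theorem upClosed_BK (hK : Hcl K ⊆ K) : UpClosed V (BK V K) := by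
  intro k θ hθ ψ hθψ
  obtain ⟨A, hA, φ, hφ, hφb⟩ := hθ
  obtain ⟨g, hg, hgs⟩ := exists_surjective_quotAlg_of_le ψ.iscon hθψ
  exact ⟨_, hK ⟨A, hA, fun a => g (φ a), isHom_comp hφ hg, hgs.comp hφb.2⟩, isomorphic_refl _⟩

theorem KB_BK_eq (hKV : K ⊆ Vfg V) (hK : Hcl K ⊆ K) : KB V (BK V K) = K := by
  have hIK : Icl K ⊆ K := (Icl_subset_Hcl K).trans hK
  apply Set.Subset.antisymm
  · rintro _ ⟨_, ⟨k, θ, ⟨A, hA, hAθ⟩, rfl⟩, hθB⟩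
    exact hIK ⟨A, hA, isomorphic_trans hAθ hθB⟩
  · intro A hA
    obtain ⟨m, θ, hiso⟩ := exists_isomorphic_quotAlg (hKV hA).1 (hKV hA).2
    exact ⟨_, ⟨m, θ, ⟨A, hA, isomorphic_symm hiso⟩, rfl⟩, hiso⟩

end CongruencesOfClass

section ClassOfCongruences

variable {V : Set (Alg σ)} {B : ∀ k : ℕ, Set (Cong (freeAlg V k))}

theorem KB_subset_Vfg (hV : IsVariety V) : KB V B ⊆ Vfg V := by
  rintro A ⟨_, ⟨k, θ, -, rfl⟩, h, hh, hb⟩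
  have hq := quot_mk_isHom θ.iscon
  refine ⟨hV.2.2 ⟨_, hV.2.2 ⟨_, freeAlg_mem hV k, _, hq, quot_mk_surjective _⟩, h, hh, hb.2⟩,
    ((freeAlg_finGen V k).of_surjective hq (quot_mk_surjective _)).of_surjective hh hb.2⟩

theorem exists_mem_eq_kerRel_of_mem_KB (hV : IsVariety V) (hinv : InvSubstClosed V B)
    {A : Alg σ} (hA : A ∈ KB V B) {m : ℕ} {h : (freeAlg V m).carrier → A.carrier}
    (hh : IsHom (freeAlg V m) A h) : ∃ θ ∈ B m, θ.r = kerRel h := by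
  obtain ⟨_, ⟨k, ψ, hψ, rfl⟩, hiso⟩ := hA
  obtain ⟨χ, hχ, hχb⟩ := isomorphic_symm hiso
  obtain ⟨t, ht⟩ := exists_kerRel_eq_conSubstRel hV (isHom_comp hh hχ)
  obtain ⟨θ, hθ, hθt⟩ := hinv k m ψ hψ t
  refine ⟨θ, hθ, ?_⟩
  rw [hθt, ← ht]
  funext a b
  exact propext hχb.1.eq_iff

theorem Hcl_KB_subset (hup : UpClosed V B) : Hcl (KB V B) ⊆ KB V B := by
  rintro C ⟨_, ⟨_, ⟨k, θ, hθ, rfl⟩, φ, hφ, hφb⟩, g, hg, hgs⟩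
  have hh : IsHom (freeAlg V k) C (fun a => g (φ (Quot.mk θ.r a))) :=
    isHom_comp (isHom_comp (quot_mk_isHom θ.iscon) hφ) hg
  have hs : Function.Surjective fun a => g (φ (Quot.mk θ.r a)) :=
    hgs.comp (hφb.2.comp (quot_mk_surjective _))
  have hker : Cong.ker hh ∈ B k :=
    hup k θ hθ _ fun a b hab => congrArg (fun q => g (φ q)) (Quot.sound hab)
  exact ⟨_, ⟨k, _, hker, rfl⟩, isomorphic_quotAlg_kerRel hh hs⟩

/-- A finitely generated `C ⊆ ∏ A i` is `F_{m+1}^V / ker h`, and `ker h` is the intersection of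
the kernels of the coordinates of `h`, each of which lies in `B`. -/
theorem SPf_KB_subset (hV : IsVariety V) (hinv : InvSubstClosed V B) (hint : InterClosed V B) :
    SPf (KB V B) ⊆ KB V B := by
  rintro C ⟨hCfg, n, A, hA, e, he, hei⟩
  have hCV : C ∈ V :=
    hV.2.1 ⟨PiAlg A, hV.1 _ A fun i => (KB_subset_Vfg hV (hA i)).1, e, he, hei⟩
  obtain ⟨m, h, hh, hs⟩ := exists_surjective_of_finGen hCV hCfg
  choose ρ hρ hρh using fun i => exists_mem_eq_kerRel_of_mem_KB hV hinv (hA i)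
    (isHom_comp (isHom_comp hh he) (proj_isHom A i))
  obtain ⟨θ, hθ, hθρ⟩ := hint m n ρ hρ
  have hker : θ.r = kerRel h := by
    rw [hθρ]
    funext a b
    simp only [hρh, kerRel]
    exact propext (funext_iff.symm.trans hei.eq_iff)
  exact ⟨_, ⟨m, θ, hθ, rfl⟩, hker ▸ isomorphic_quotAlg_kerRel hh hs⟩

theorem BK_KB_eq (hV : IsVariety V) (hinv : InvSubstClosed V B) (k : ℕ) :
    BK V (KB V B) k = B k := by
  apply Set.Subset.antisymm
  · rintro θ ⟨A, hA, hiso⟩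
    obtain ⟨χ, hχ, hχb⟩ := isomorphic_symm hiso
    obtain ⟨θ', hθ', hθ'h⟩ := exists_mem_eq_kerRel_of_mem_KB hV hinv hA
      (isHom_comp (quot_mk_isHom θ.iscon) hχ)
    have hθθ' : θ' = θ := by
      refine Cong.ext' (hθ'h.trans (funext₂ fun a b => propext ?_))
      exact hχb.1.eq_iff.trans (θ.iscon.1.quot_mk_eq_iff a b)
    exact hθθ' ▸ hθ'
  · intro θ hθ
    exact ⟨_, ⟨_, ⟨k, θ, hθ, rfl⟩, isomorphic_refl _⟩, isomorphic_refl _⟩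

end ClassOfCongruences

/-- Corollary 5 of the paper. The assignments `K ↦ B^K` and
`B ↦ K^B` establish a one-to-one correspondence between the subclasses of `V_fg`
that are pseudovarieties of finitely generated algebras and the subfamilies of
`Con(F^V)` that are closed under inverse substitution and are filters in each
component (upward closed and closed under finite intersections). -/
theorem correspondence_pseudovarieties {σ : Signature} (V : Set (Alg σ))
    (hV : IsVariety V) :
    (∀ K : Set (Alg σ), K ⊆ Vfg V → IsPseudovarietyFG K →
      (InvSubstClosed V (BK V K) ∧ UpClosed V (BK V K) ∧ InterClosed V (BK V K)) ∧
      KB V (BK V K) = K) ∧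
    (∀ B : ∀ k : ℕ, Set (Cong (freeAlg V k)),
      InvSubstClosed V B → UpClosed V B → InterClosed V B →
      (KB V B ⊆ Vfg V ∧ IsPseudovarietyFG (KB V B)) ∧
      ∀ k : ℕ, BK V (KB V B) k = B k) := by
  refine ⟨fun K hKV ⟨_, hH, hSPf⟩ => ?_, fun B hinv hup hint => ?_⟩
  · exact ⟨⟨invSubstClosed_BK hV hSPf, upClosed_BK hH, interClosed_BK hSPf⟩, KB_BK_eq hKV hH⟩
  · have hKB := KB_subset_Vfg (B := B) hV
    exact ⟨⟨hKB, ⟨fun A hA => (hKB hA).2, Hcl_KB_subset hup, SPf_KB_subset hV hinv hint⟩⟩,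
      BK_KB_eq hV hinv⟩
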